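/- Let w ∈ V_ℂ satisfy P(w)z = (z|w)w for all z (e.g. w in the minimal orbit 𝕏). Then for every k ≥ 1 the Bessel operator acts on powers of the linear form by 𝓑_z (z|w)^k = k(λ + k − 1)(z|w)^{k−1} w. -/

import Mathlib

/-- The ℂ-bilinear trace form `B(x,y) = ∑ᵢ xᵢ yᵢ` on the complexified Jordan algebra. -/
noncomputable def bformC (n : ℕ) (x y : Fin n → ℂ) : ℂ := ∑ i, x i * y i

/-- The quadratic representation `P(x) = 2 L(x)² − L(x²)` of a complex Jordan product. -/
noncomputable def quadRepC (n : ℕ)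
    (mul : (Fin n → ℂ) →ₗ[ℂ] (Fin n → ℂ) →ₗ[ℂ] (Fin n → ℂ)) (x : Fin n → ℂ) :
    (Fin n → ℂ) →ₗ[ℂ] (Fin n → ℂ) :=
  2 • ((mul x).comp (mul x)) - mul (mul x x)

/-- The polarized quadratic representation `P(x,y) = ½(P(x+y) − P(x) − P(y))`. -/
noncomputable def quadRepPolC (n : ℕ)
    (mul : (Fin n → ℂ) →ₗ[ℂ] (Fin n → ℂ) →ₗ[ℂ] (Fin n → ℂ)) (a b : Fin n → ℂ) :
    (Fin n → ℂ) →ₗ[ℂ] (Fin n → ℂ) :=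
  (1 / 2 : ℂ) • (quadRepC n mul (a + b) - quadRepC n mul a - quadRepC n mul b)

/-- The holomorphic Bessel operator
`𝓑 u(z) = ∑_{α,β} ∂²u/∂z_α∂z_β P(e_α,e_β)z + λ ∑_α ∂u/∂z_α e_α`, computed in the
standard (self-dual) basis. -/
noncomputable def besselOpC (n : ℕ)
    (mul : (Fin n → ℂ) →ₗ[ℂ] (Fin n → ℂ) →ₗ[ℂ] (Fin n → ℂ)) (l : ℂ)
    (u : (Fin n → ℂ) → ℂ) (z : Fin n → ℂ) : Fin n → ℂ :=
  (∑ α : Fin n, ∑ β : Fin n,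
      iteratedFDeriv ℂ 2 u z ![(Pi.single α 1 : Fin n → ℂ), (Pi.single β 1 : Fin n → ℂ)] •
        quadRepPolC n mul ((Pi.single α 1 : Fin n → ℂ)) ((Pi.single β 1 : Fin n → ℂ)) z)
    + l • (∑ α : Fin n, fderiv ℂ u z ((Pi.single α 1 : Fin n → ℂ)) • (Pi.single α 1 : Fin n → ℂ))

/-! Write `(z|w)^k = f (L z)` with `L = (·|w)` and `f t = t^k`. The second derivative of `f ∘ L`
is `f''(L z) · L a · L b` and `L eₐ = wₐ`, so the Hessian term of `𝓑` is `f''(L z)` times the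
double sum `∑ wₐ w_β P(eₐ, e_β) z`, which is the polar of the quadratic map `P` at `(w, w)`
halved, i.e. `P(w) z = (z|w) w`. The gradient term gives `λ f'(L z) w`, and
`k(k-1) t^{k-1} + λ k t^{k-1} = k(λ + k - 1) t^{k-1}`. -/

theorem LinearMap.sum_sum_smul_apply_single_single {R ι P : Type*} [CommSemiring R] [Fintype ι]
    [DecidableEq ι] [AddCommMonoid P] [Module R P] (B : (ι → R) →ₗ[R] (ι → R) →ₗ[R] P)
    (x y : ι → R) :
    ∑ i, ∑ j, (x i * y j) • B (Pi.single i 1) (Pi.single j 1) = B x y := by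
  conv_rhs => rw [pi_eq_sum_univ' x, pi_eq_sum_univ' y]
  simp only [map_sum, LinearMap.sum_apply, map_smul, LinearMap.smul_apply, Finset.smul_sum,
    smul_smul, mul_comm (y _)]
  exact Finset.sum_comm

section Calculus

variable {𝕜 E : Type*} [NontriviallyNormedField 𝕜] [NormedAddCommGroup E] [NormedSpace 𝕜 E]

theorem fderiv_comp_clm_apply {f : 𝕜 → 𝕜} (L : E →L[𝕜] 𝕜) {z : E}
    (hf : DifferentiableAt 𝕜 f (L z)) (a : E) :
    fderiv 𝕜 (f ∘ L) z a = deriv f (L z) * L a := by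
  rw [fderiv_comp z hf L.differentiableAt, L.fderiv]
  simp [mul_comm]

theorem iteratedFDeriv_two_comp_clm_apply {f : 𝕜 → 𝕜} (hf : ContDiff 𝕜 2 f) (L : E →L[𝕜] 𝕜)
    (z a b : E) :
    iteratedFDeriv 𝕜 2 (f ∘ L) z ![a, b] = iteratedDeriv 2 f (L z) * (L a * L b) := by
  rw [L.iteratedFDeriv_comp_right hf z le_rfl,
    ContinuousMultilinearMap.compContinuousLinearMap_apply,
    iteratedFDeriv_apply_eq_iteratedDeriv_mul_prod]
  simp [Fin.prod_univ_two, mul_comm]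

end Calculus

section Jordan

variable {n : ℕ} (mul : (Fin n → ℂ) →ₗ[ℂ] (Fin n → ℂ) →ₗ[ℂ] (Fin n → ℂ))

noncomputable def quadRepQuadraticMap : QuadraticMap ℂ (Fin n → ℂ) (Module.End ℂ (Fin n → ℂ)) :=
  2 • LinearMap.BilinMap.toQuadraticMap
      ((LinearMap.llcomp ℂ (Fin n → ℂ) (Fin n → ℂ) (Fin n → ℂ)).comp mul |>.compl₂ mul)
    - LinearMap.BilinMap.toQuadraticMap (mul.compr₂ mul)

theorem quadRepQuadraticMap_apply (x : Fin n → ℂ) :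
    quadRepQuadraticMap mul x = quadRepC n mul x := rfl

theorem quadRepPolC_eq_half_polar (a b : Fin n → ℂ) :
    quadRepPolC n mul a b = (1 / 2 : ℂ) • QuadraticMap.polar (quadRepQuadraticMap mul) a b := rfl

theorem sum_sum_smul_quadRepPolC_single (w : Fin n → ℂ) :
    ∑ α, ∑ β, (w α * w β) • quadRepPolC n mul (Pi.single α 1) (Pi.single β 1) =
      quadRepC n mul w := by
  simp only [quadRepPolC_eq_half_polar, smul_comm _ (1 / 2 : ℂ), ← Finset.smul_sum,
    ← QuadraticMap.polarBilin_apply_apply, LinearMap.sum_sum_smul_apply_single_single]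
  rw [QuadraticMap.polarBilin_apply_apply, QuadraticMap.polar_self, quadRepQuadraticMap_apply]
  module

noncomputable def bformCLM (w : Fin n → ℂ) : (Fin n → ℂ) →L[ℂ] ℂ :=
  ∑ i, w i • ContinuousLinearMap.proj i

theorem bformCLM_apply (w v : Fin n → ℂ) : bformCLM w v = bformC n v w := by
  simp [bformCLM, bformC, mul_comm]

theorem bformC_single (w : Fin n → ℂ) (α : Fin n) : bformC n (Pi.single α 1) w = w α := by
  simp [bformC, Pi.single_apply]

theorem besselOpC_comp_bformC (l : ℂ) (w : Fin n → ℂ) {f : ℂ → ℂ} (hf : ContDiff ℂ 2 f)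
    (z : Fin n → ℂ) :
    besselOpC n mul l (fun v => f (bformC n v w)) z =
      iteratedDeriv 2 f (bformC n z w) • quadRepC n mul w z
        + (l * deriv f (bformC n z w)) • w := by
  have hu : (fun v => f (bformC n v w)) = f ∘ bformCLM w := by
    funext v; simp [bformCLM_apply]
  have hdf : DifferentiableAt ℂ f (bformCLM w z) := hf.differentiable (by norm_num) _
  simp only [besselOpC, hu, iteratedFDeriv_two_comp_clm_apply hf, fderiv_comp_clm_apply _ hdf,
    bformCLM_apply, bformC_single]
  rw [← sum_sum_smul_quadRepPolC_single mul w]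
  congr 1
  · simp only [LinearMap.sum_apply, LinearMap.smul_apply, Finset.smul_sum, smul_smul]
  · simp only [mul_smul, ← Finset.smul_sum, ← pi_eq_sum_univ']

end Jordan

theorem stmt_12_general (n : ℕ)
    (mul : (Fin n → ℂ) →ₗ[ℂ] (Fin n → ℂ) →ₗ[ℂ] (Fin n → ℂ))
    (l : ℂ) (w : Fin n → ℂ)
    (hw : ∀ z : Fin n → ℂ, quadRepC n mul w z = bformC n z w • w)
    (k : ℕ) :
    ∀ z : Fin n → ℂ,
      besselOpC n mul l (fun v => bformC n v w ^ k) z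
        = ((k : ℂ) * (l + (k : ℂ) - 1)) • (bformC n z w ^ (k - 1) • w) := by
  intro z
  rw [besselOpC_comp_bformC mul l w (f := (· ^ k)) (contDiff_id.pow k), hw, smul_smul,
    ← add_smul, smul_smul, iteratedDeriv_pow, deriv_pow_field]
  congr 1
  rcases k with _ | _ | k
  · simp
  · simp
  · simp only [Nat.descFactorial_succ, Nat.descFactorial_zero, Nat.add_sub_cancel]
    push_cast
    ring

/-- If `w` satisfies `P(w)z = (z|w)w` for all `z` (e.g. `w` in the minimal orbit `𝕏`),
then `𝓑_z (z|w)^k = k(λ + k − 1)(z|w)^{k−1} w` for all `k ≥ 1`. -/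
theorem stmt_12 (n : ℕ)
    (mul : (Fin n → ℂ) →ₗ[ℂ] (Fin n → ℂ) →ₗ[ℂ] (Fin n → ℂ))
    (hcomm : ∀ a b, mul a b = mul b a)
    (l : ℂ) (w : Fin n → ℂ)
    (hw : ∀ z : Fin n → ℂ, quadRepC n mul w z = bformC n z w • w)
    (k : ℕ) (hk : 1 ≤ k) :
    ∀ z : Fin n → ℂ,
      besselOpC n mul l (fun v => bformC n v w ^ k) z
        = ((k : ℂ) * (l + (k : ℂ) - 1)) • (bformC n z w ^ (k - 1) • w) :=
  stmt_12_general n mul l w hw k
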